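/- Let K be a field of characteristic zero, V a finite-dimensional K-vector space of dimension d, and n a natural number with n > d. Let ι : S_{d+1} → S_n be the embedding that lets a permutation act on the first d+1 letters and fixes the remaining letters. Then the kernel of the K-algebra homomorphism Φ_V : K[S_n] → End_K(V^{⊗n}), σ ↦ L_σ^{(n)}, is the two-sided ideal of K[S_n] generated by the element Σ_{σ ∈ S_{d+1}} sgn(σ)·ι(σ). -/

import Mathlib

open scoped TensorProduct

/-- The endomorphism `L_σ^{(n)}` of the `n`-th tensor power of `V`, determined by
`v_1 ⊗ ⋯ ⊗ v_n ↦ v_{σ⁻¹(1)} ⊗ ⋯ ⊗ v_{σ⁻¹(n)}`. -/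
noncomputable def permMap (K : Type*) [Field K] (V : Type*) [AddCommGroup V] [Module K V]
    (n : ℕ) (σ : Equiv.Perm (Fin n)) :
    (⨂[K] _ : Fin n, V) →ₗ[K] ⨂[K] _ : Fin n, V :=
  (PiTensorProduct.reindex K (fun _ : Fin n => V) σ).toLinearMap

/-- The endomorphism `T^{⊗n}` of the `n`-th tensor power of `V` induced by `T : V →ₗ[K] V`. -/
noncomputable def tpowMap (K : Type*) [Field K] (V : Type*) [AddCommGroup V] [Module K V]
    (n : ℕ) (T : V →ₗ[K] V) :
    (⨂[K] _ : Fin n, V) →ₗ[K] ⨂[K] _ : Fin n, V :=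
  PiTensorProduct.map fun _ => T

/-- The `K`-linear map `Φ_V : K[S_n] → End_K(V^{⊗n})` determined by `σ ↦ L_σ^{(n)}`. -/
noncomputable def PhiMap (K : Type*) [Field K] (V : Type*) [AddCommGroup V] [Module K V]
    (n : ℕ) :
    MonoidAlgebra K (Equiv.Perm (Fin n)) →ₗ[K] Module.End K (⨂[K] _ : Fin n, V) :=
  Finsupp.linearCombination K (permMap K V n) ∘ₗ (MonoidAlgebra.coeffLinearEquiv K).toLinearMap

/-!
The antisymmetrizer on `d + 1` tensor positions kills `V^{⊗n}`: on a tensor of basis vectors two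
of these positions carry the same basis vector, and their transposition pairs off the terms with
opposite signs. So the ideal lies in the kernel.

Conversely, modulo the ideal every permutation is a combination of permutations without a
decreasing subsequence of length `d + 1`: if `σ` has one, at positions `q`, then `σ A_q` lies in
the ideal and its other terms `σ ρ_q` are lexicographically smaller than `σ`. A permutation `σ`
without such a subsequence splits into `d` increasing subsequences (Mirsky); colouring each
position by its subsequence, `σ` is the lexicographically least permutation sending the basis tensor `e_c` to `e_{c ∘ σ⁻¹}`. Hence the
lexicographically largest permutation in a nonzero combination of such permutations is the only
one contributing to that matrix coefficient, and the combination acts nontrivially.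
-/

open Finset Equiv

section DecreasingSubsequences

variable {ι β : Type*} [LinearOrder ι] [Fintype ι] [LinearOrder β]

def AvoidsDecreasing (d : ℕ) (w : ι → β) : Prop :=
  ∀ s : Finset ι, StrictAntiOn w s → #s ≤ d

open scoped Classical in
noncomputable def longestDecreasingAt (w : ι → β) (i : ι) : ℕ :=
  ({s : Finset ι | i ∈ s ∧ ↑s ⊆ Set.Iic i ∧ StrictAntiOn w s} : Finset (Finset ι)).sup card

variable {w : ι → β} {i j : ι}

lemma card_le_longestDecreasingAt {s : Finset ι} (hi : i ∈ s) (hs : ↑s ⊆ Set.Iic i)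
    (hw : StrictAntiOn w s) :
    #s ≤ longestDecreasingAt w i := by
  classical
  exact le_sup (f := card) (by simp [hi, hs, hw])

lemma exists_card_eq_longestDecreasingAt (w : ι → β) (i : ι) :
    ∃ s : Finset ι, i ∈ s ∧ ↑s ⊆ Set.Iic i ∧ StrictAntiOn w s ∧ #s = longestDecreasingAt w i := by
  classical
  obtain ⟨s, hs, hsup⟩ := exists_mem_eq_sup
    ({s : Finset ι | i ∈ s ∧ ↑s ⊆ Set.Iic i ∧ StrictAntiOn w s} : Finset (Finset ι))
    ⟨{i}, by simp⟩ card
  rw [mem_filter] at hs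
  exact ⟨s, hs.2.1, hs.2.2.1, hs.2.2.2, by rw [longestDecreasingAt, hsup]⟩

lemma one_le_longestDecreasingAt (w : ι → β) (i : ι) : 1 ≤ longestDecreasingAt w i :=
  card_singleton i ▸ card_le_longestDecreasingAt (mem_singleton_self i) (by simp) (by simp)

lemma longestDecreasingAt_lt_longestDecreasingAt (hij : i < j) (hw : w j < w i) :
    longestDecreasingAt w i < longestDecreasingAt w j := by
  classical
  obtain ⟨s, his, hs, hws, hcard⟩ := exists_card_eq_longestDecreasingAt w i
  have hjs : j ∉ s := fun hj => (hs hj).not_gt hij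
  have hanti : StrictAntiOn w ↑(insert j s) := by
    intro a ha b hb hab
    simp only [coe_insert, Set.mem_insert_iff, mem_coe] at ha hb
    rcases hb with rfl | hb
    · rcases ha with rfl | ha
      · exact absurd hab (lt_irrefl _)
      · exact hw.trans_le (hws.antitoneOn ha his (hs ha))
    · rcases ha with rfl | ha
      · exact absurd ((hs hb).trans hij.le) hab.not_ge
      · exact hws ha hb hab
  have hsub : ↑(insert j s) ⊆ Set.Iic j := by
    rw [coe_insert, Set.insert_subset_iff]
    exact ⟨le_refl j, fun a ha => (hs ha).trans hij.le⟩
  have := card_le_longestDecreasingAt (mem_insert_self j s) hsub hanti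
  rw [card_insert_of_notMem hjs] at this
  omega

/-- Mirsky's theorem for the order of decreasing subsequences: colour `i` by the length of a
longest decreasing subsequence ending at `i`. -/
theorem exists_coloring_monotoneOn_of_avoidsDecreasing {d : ℕ}
    (hw : AvoidsDecreasing d w) :
    ∃ c : ι → Fin d, ∀ k, MonotoneOn w {i | c i = k} := by
  refine ⟨fun i => ⟨longestDecreasingAt w i - 1, ?_⟩, fun k a ha b hb hab => ?_⟩
  · obtain ⟨s, -, -, hs, hcard⟩ := exists_card_eq_longestDecreasingAt w i
    have := hw s hs
    have := one_le_longestDecreasingAt w i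
    omega
  · by_contra hlt
    have hab' : a < b := lt_of_le_of_ne hab (by rintro rfl; exact hlt le_rfl)
    have := longestDecreasingAt_lt_longestDecreasingAt hab' (not_le.1 hlt)
    have := one_le_longestDecreasingAt w a
    have hk : longestDecreasingAt w a - 1 = longestDecreasingAt w b - 1 := by
      simpa using congrArg Fin.val (ha.trans hb.symm)
    omega

end DecreasingSubsequences

section LexOrder

variable {n : ℕ}

theorem toLex_le_of_comp_eq {α : Type*} {σ τ : Perm (Fin n)} (c : Fin n → α)
    (hσ : ∀ k, MonotoneOn σ {i | c (σ i) = k}) (hτ : c ∘ τ = c ∘ σ) :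
    toLex ⇑σ ≤ toLex ⇑τ := by
  refine not_lt.1 fun ⟨i, hi, hlt⟩ => ?_
  set j := σ.symm (τ i)
  have hj : σ j = τ i := σ.apply_symm_apply _
  rcases lt_or_ge j i with hji | hij
  · exact hji.ne (τ.injective ((hi j hji).trans hj))
  · have hc : c (σ j) = c (σ i) := by rw [hj]; exact congrFun hτ i
    have hle : σ i ≤ σ j := hσ _ rfl hc hij
    exact hle.not_gt (hj ▸ hlt)

theorem toLex_one_le (ρ : Perm (Fin n)) : toLex ⇑(1 : Perm (Fin n)) ≤ toLex ⇑ρ :=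
  toLex_le_of_comp_eq (fun _ => ()) (fun _ => monotone_id.monotoneOn _) rfl

theorem toLex_mul_viaEmbedding_lt {m : ℕ} {σ : Perm (Fin n)} {q : Fin m ↪o Fin n}
    (hσ : StrictAnti (σ ∘ q)) {ρ : Perm (Fin m)} (hρ : ρ ≠ 1) :
    toLex ⇑(σ * ρ.viaEmbedding q.toEmbedding) < toLex ⇑σ := by
  obtain ⟨i, hfix, hi⟩ : toLex ⇑(1 : Perm (Fin m)) < toLex ⇑ρ :=
    (toLex_one_le ρ).lt_of_ne fun h => hρ (DFunLike.coe_injective (congrArg ofLex h)).symm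
  refine ⟨q i, fun x hx => ?_, ?_⟩
  · show σ (ρ.viaEmbedding q.toEmbedding x) = σ x
    by_cases hxq : x ∈ Set.range q
    · obtain ⟨j, rfl⟩ := hxq
      have hj : ρ j = j := (hfix j (q.lt_iff_lt.1 hx)).symm
      have := Perm.viaEmbedding_apply ρ q.toEmbedding j
      simp only [RelEmbedding.coe_toEmbedding, hj] at this
      rw [this]
    · rw [Perm.viaEmbedding_apply_of_notMem _ _ _ hxq]
  · show σ (ρ.viaEmbedding q.toEmbedding (q.toEmbedding i)) < σ (q i)
    rw [Perm.viaEmbedding_apply]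
    exact hσ hi

end LexOrder

section Antisymmetrizer

variable (K : Type*) [Ring K] {α β : Type*}

noncomputable def antisymmetrizer [Fintype α] [DecidableEq α] (q : α ↪ β) :
    MonoidAlgebra K (Perm β) :=
  ∑ ρ : Perm α, MonoidAlgebra.single (ρ.viaEmbedding q) ((Perm.sign ρ : ℤ) : K)

theorem Equiv.Perm.viaEmbedding_trans_toEmbedding (ρ : Perm α) (q : α ↪ β) (τ : Perm β) :
    ρ.viaEmbedding (q.trans τ.toEmbedding) = τ * ρ.viaEmbedding q * τ⁻¹ := by
  ext x
  by_cases hx : x ∈ Set.range (q.trans τ.toEmbedding)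
  · obtain ⟨a, rfl⟩ := hx
    have h1 := Perm.viaEmbedding_apply ρ (q.trans τ.toEmbedding) a
    have h2 := Perm.viaEmbedding_apply ρ q a
    simp only [Function.Embedding.trans_apply, Equiv.coe_toEmbedding] at h1 ⊢
    rw [h1, Perm.mul_apply, Perm.mul_apply, Perm.inv_def, symm_apply_apply, h2]
  · have hx' : τ⁻¹ x ∉ Set.range q := by
      rintro ⟨a, ha⟩
      exact hx ⟨a, by simp [ha]⟩
    rw [Perm.viaEmbedding_apply_of_notMem _ _ _ hx, Perm.mul_apply, Perm.mul_apply,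
      Perm.viaEmbedding_apply_of_notMem _ _ _ hx', Perm.inv_def, apply_symm_apply]

theorem single_mul_antisymmetrizer_mul_single_inv [Fintype α] [DecidableEq α] (q : α ↪ β)
    (τ : Perm β) :
    MonoidAlgebra.single τ (1 : K) * antisymmetrizer K q * MonoidAlgebra.single τ⁻¹ 1 =
      antisymmetrizer K (q.trans τ.toEmbedding) := by
  simp only [antisymmetrizer, Finset.mul_sum, Finset.sum_mul, MonoidAlgebra.single_mul_single,
    one_mul, mul_one, Perm.viaEmbedding_trans_toEmbedding]

theorem antisymmetrizer_mem_span [Fintype α] [DecidableEq α] (q q' : α ↪ β) :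
    antisymmetrizer K q' ∈ TwoSidedIdeal.span {antisymmetrizer K q} := by
  obtain ⟨τ, hτ⟩ := Perm.exists_extending_pair q q' q.injective q'.injective
  have hq' : q.trans τ.toEmbedding = q' := Function.Embedding.ext hτ
  rw [← hq', ← single_mul_antisymmetrizer_mul_single_inv]
  exact TwoSidedIdeal.mul_mem_right _ _ _
    (TwoSidedIdeal.mul_mem_left _ _ _ (TwoSidedIdeal.subset_span rfl))

end Antisymmetrizer

section TensorPower

open PiTensorProduct Module

variable (K : Type*) [Field K] (V : Type*) [AddCommGroup V] [Module K V] {n : ℕ}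

theorem permMap_tprod (σ : Perm (Fin n)) (v : Fin n → V) :
    permMap K V n σ (tprod K v) = tprod K (v ∘ ⇑σ⁻¹) :=
  reindex_tprod _ _

noncomputable def permMapHom : Perm (Fin n) →* Module.End K (⨂[K] _ : Fin n, V) where
  toFun := permMap K V n
  map_one' := by
    rw [permMap, Perm.one_def, reindex_refl]
    rfl
  map_mul' σ τ := by
    rw [permMap, Perm.mul_def, ← reindex_trans]
    rfl

noncomputable def phiAlgHom :
    MonoidAlgebra K (Perm (Fin n)) →ₐ[K] Module.End K (⨂[K] _ : Fin n, V) :=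
  MonoidAlgebra.lift K _ _ (permMapHom K V)

theorem PhiMap_eq_phiAlgHom (x : MonoidAlgebra K (Perm (Fin n))) :
    PhiMap K V n x = phiAlgHom K V x := by
  rw [phiAlgHom, MonoidAlgebra.lift_apply]
  rfl

theorem phiAlgHom_apply (x : MonoidAlgebra K (Perm (Fin n))) :
    phiAlgHom K V x = ∑ σ, x.coeff σ • permMap K V n σ := by
  rw [phiAlgHom, MonoidAlgebra.lift_apply, Finsupp.sum_fintype _ _ (by simp)]
  rfl

variable {K V} {ι : Type*}

theorem permMap_basis (b : Basis ι K V) (σ : Perm (Fin n)) (f : Fin n → ι) :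
    permMap K V n σ (Basis.piTensorProduct (fun _ => b) f) =
      Basis.piTensorProduct (fun _ => b) (f ∘ ⇑σ⁻¹) := by
  simp only [Basis.piTensorProduct_apply, permMap_tprod]
  rfl

theorem comp_viaEmbedding_swap {α β γ : Type*} [DecidableEq α] {f : β → γ} {q : α ↪ β}
    {a a' : α} (h : f (q a) = f (q a')) : f ∘ (swap a a').viaEmbedding q = f := by
  funext x
  by_cases hx : x ∈ Set.range q
  · obtain ⟨c, rfl⟩ := hx
    rw [Function.comp_apply, Perm.viaEmbedding_apply, swap_apply_def]
    split_ifs <;> subst_vars <;> simp [h]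
  · rw [Function.comp_apply, Perm.viaEmbedding_apply_of_notMem _ _ _ hx]

theorem phiAlgHom_antisymmetrizer [Fintype ι] (b : Basis ι K V) {α : Type*} [Fintype α]
    [DecidableEq α] (q : α ↪ Fin n) (h : Fintype.card ι < Fintype.card α) :
    phiAlgHom K V (antisymmetrizer K q) = 0 := by
  refine (Basis.piTensorProduct fun _ => b).ext fun f => ?_
  obtain ⟨a, a', hne, hf⟩ := Fintype.exists_ne_map_eq_of_card_lt (f ∘ q) h
  have hfix : ∀ ρ : Perm α, f ∘ ⇑((ρ * swap a a').viaEmbedding q)⁻¹ =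
      f ∘ ⇑(ρ.viaEmbedding q)⁻¹ := fun ρ => by
    rw [← Perm.viaEmbeddingHom_apply, map_mul, mul_inv_rev, Perm.coe_mul, ← Function.comp_assoc,
      ← map_inv, swap_inv, Perm.viaEmbeddingHom_apply, comp_viaEmbedding_swap hf,
      Perm.viaEmbeddingHom_apply]
  simp only [antisymmetrizer, map_sum, MonoidAlgebra.lift_single, phiAlgHom, LinearMap.sum_apply,
    LinearMap.smul_apply, LinearMap.zero_apply]
  refine Finset.sum_ninvolution (· * swap a a') (fun ρ => ?_) (fun ρ _ => ?_) (fun _ => mem_univ _)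
    (fun ρ => by simp [mul_assoc])
  · change _ • permMap K V n _ _ + _ • permMap K V n _ _ = 0
    rw [permMap_basis, permMap_basis, hfix, Perm.sign_mul, Perm.sign_swap hne]
    simp
  · simpa using hne

end TensorPower

section AvoidingPermutations

open Module

variable (K : Type*) [Field K] {n d : ℕ}

noncomputable def avoidingSubmodule (d n : ℕ) :
    Submodule K (MonoidAlgebra K (Perm (Fin n))) :=
  (Finsupp.supported K K {σ : Perm (Fin n) | AvoidsDecreasing d σ}).comap
    (MonoidAlgebra.coeffLinearEquiv K).toLinearMap

variable {K} {V : Type*} [AddCommGroup V] [Module K V]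

theorem eq_zero_of_phiAlgHom_eq_zero (b : Basis (Fin d) K V)
    {x : MonoidAlgebra K (Perm (Fin n))} (hx : phiAlgHom K V x = 0)
    (hxd : x ∈ avoidingSubmodule K d n) : x = 0 := by
  by_contra hx0
  obtain ⟨σ₀, hσ₀, hmax⟩ := x.coeff.support.exists_max_image (fun σ => toLex ⇑σ)
    (Finsupp.support_nonempty_iff.2 fun h => hx0 (MonoidAlgebra.ext h))
  obtain ⟨c, hc⟩ :=
    exists_coloring_monotoneOn_of_avoidsDecreasing ((Finsupp.mem_supported K _).1 hxd hσ₀)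
  set B := Basis.piTensorProduct fun _ : Fin n => b
  have hcoord : ∀ σ ≠ σ₀, x.coeff σ * B.repr (permMap K V n σ (B c)) (c ∘ ⇑σ₀⁻¹) = 0 := by
    intro σ hσ
    rw [permMap_basis, Basis.repr_self, Finsupp.single_apply]
    split_ifs with hcol
    · have hlt : toLex ⇑σ₀ < toLex ⇑σ := by
        refine (toLex_le_of_comp_eq (c ∘ ⇑σ₀⁻¹) (by simpa using hc) ?_).lt_of_ne ?_
        · funext i
          simpa using (congrFun hcol (σ i)).symm
        · exact fun h => hσ (DFunLike.coe_injective (congrArg ofLex h)).symm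
      rw [Finsupp.notMem_support_iff.1 fun hσx => (hmax σ hσx).not_gt hlt, zero_mul]
    · rw [mul_zero]
  have hx₀ : B.repr (phiAlgHom K V x (B c)) (c ∘ ⇑σ₀⁻¹) = x.coeff σ₀ := by
    rw [phiAlgHom_apply, LinearMap.sum_apply, map_sum, Finsupp.finsetSum_apply,
      Finset.sum_eq_single σ₀ (fun σ _ hσ => by simpa using hcoord σ hσ) (by simp),
      LinearMap.smul_apply, map_smul, permMap_basis, Basis.repr_self, Finsupp.smul_apply,
      Finsupp.single_eq_same, smul_eq_mul, mul_one]
  rw [hx] at hx₀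
  exact Finsupp.mem_support_iff.1 hσ₀ (by simpa using hx₀.symm)

variable (K)

theorem single_mem_span_antisymmetrizer_sup (q₀ : Fin (d + 1) ↪ Fin n) (σ : Perm (Fin n)) :
    MonoidAlgebra.single σ (1 : K) ∈
      (TwoSidedIdeal.span {antisymmetrizer K q₀}).asIdeal.restrictScalars K ⊔
        avoidingSubmodule K d n := by
  set M := (TwoSidedIdeal.span {antisymmetrizer K q₀}).asIdeal.restrictScalars K
  induction σ using (InvImage.wf (fun σ : Perm (Fin n) => toLex ⇑σ) wellFounded_lt).induction with
  | _ σ ih =>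
  by_cases hσ : AvoidsDecreasing d σ
  · exact Submodule.mem_sup_right (Finsupp.single_mem_supported K 1 hσ)
  obtain ⟨q, hq⟩ : ∃ q : Fin (d + 1) ↪o Fin n, StrictAnti (σ ∘ q) := by
    simp only [AvoidsDecreasing, not_forall, not_le] at hσ
    obtain ⟨s, hs, hcard⟩ := hσ
    obtain ⟨t, hts, ht⟩ := exists_subset_card_eq hcard
    exact ⟨t.orderEmbOfFin ht, fun i j hij => hs (hts (t.orderEmbOfFin_mem ht i))
      (hts (t.orderEmbOfFin_mem ht j)) ((t.orderEmbOfFin ht).strictMono hij)⟩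
  have hA : MonoidAlgebra.single σ (1 : K) * antisymmetrizer K q.toEmbedding ∈ M :=
    TwoSidedIdeal.mem_asIdeal.2 (TwoSidedIdeal.mul_mem_left _ _ _ (antisymmetrizer_mem_span K _ _))
  have hsplit : MonoidAlgebra.single σ (1 : K) =
      MonoidAlgebra.single σ 1 * antisymmetrizer K q.toEmbedding -
        ∑ ρ ∈ univ.erase 1, ((Perm.sign ρ : ℤ) : K) •
          MonoidAlgebra.single (σ * ρ.viaEmbedding q.toEmbedding) 1 := by
    rw [eq_sub_iff_add_eq, antisymmetrizer, mul_sum, ← add_sum_erase _ _ (mem_univ 1)]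
    congr 1
    · rw [← Perm.viaEmbeddingHom_apply, map_one]
      simp
    · simp [MonoidAlgebra.single_mul_single, MonoidAlgebra.smul_single]
  rw [hsplit]
  exact sub_mem (Submodule.mem_sup_left hA) (sum_mem fun ρ hρ => Submodule.smul_mem _ _
    (ih _ (toLex_mul_viaEmbedding_lt hq (ne_of_mem_erase hρ))))

theorem exists_sub_mem_span_antisymmetrizer (q₀ : Fin (d + 1) ↪ Fin n)
    (x : MonoidAlgebra K (Perm (Fin n))) :
    ∃ y ∈ avoidingSubmodule K d n, x - y ∈ TwoSidedIdeal.span {antisymmetrizer K q₀} := by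
  have hx : x ∈ (TwoSidedIdeal.span {antisymmetrizer K q₀}).asIdeal.restrictScalars K ⊔
      avoidingSubmodule K d n := by
    induction x using MonoidAlgebra.induction_on with
    | of σ => exact single_mem_span_antisymmetrizer_sup K q₀ σ
    | add x y hx hy => exact add_mem hx hy
    | smul r x hx => exact Submodule.smul_mem _ r hx
  obtain ⟨z, hz, y, hy, rfl⟩ := Submodule.mem_sup.1 hx
  exact ⟨y, hy, by simpa using hz⟩

end AvoidingPermutations

theorem stmt4_general (K : Type*) [Field K] (V : Type*) [AddCommGroup V] [Module K V]
    [FiniteDimensional K V] (d n : ℕ) (hd : Module.finrank K V = d) (hn : d < n) :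
    ∀ x : MonoidAlgebra K (Equiv.Perm (Fin n)),
      PhiMap K V n x = 0 ↔
        x ∈ TwoSidedIdeal.span
          {∑ σ : Equiv.Perm (Fin (d + 1)),
            MonoidAlgebra.single (σ.viaEmbedding (Fin.castLEEmb hn)) ((Equiv.Perm.sign σ : ℤ) : K)} := by
  intro x
  let b := Module.finBasisOfFinrankEq K V hd
  change _ ↔ x ∈ TwoSidedIdeal.span {antisymmetrizer K (Fin.castLEEmb hn)}
  have hker : TwoSidedIdeal.span {antisymmetrizer K (Fin.castLEEmb hn)} ≤
      TwoSidedIdeal.ker (phiAlgHom K V) :=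
    TwoSidedIdeal.span_le.2 <| Set.singleton_subset_iff.2 <|
      TwoSidedIdeal.mem_ker _ |>.2 (phiAlgHom_antisymmetrizer b _ (by simp))
  rw [PhiMap_eq_phiAlgHom, ← TwoSidedIdeal.mem_ker]
  refine ⟨fun hx => ?_, fun hx => hker hx⟩
  obtain ⟨y, hy, hxy⟩ := exists_sub_mem_span_antisymmetrizer K (Fin.castLEEmb hn) x
  have hy0 : y = 0 := by
    refine eq_zero_of_phiAlgHom_eq_zero b ?_ hy
    simpa using (TwoSidedIdeal.mem_ker _).1 (TwoSidedIdeal.sub_mem _ hx (hker hxy))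
  simpa [hy0] using hxy

/-- if `dim_K V = d < n`, the kernel of `Φ_V : K[S_n] → End_K(V^{⊗n})` is the
two-sided ideal of `K[S_n]` generated by `Σ_{σ ∈ S_{d+1}} sgn(σ)·ι(σ)`, where
`ι : S_{d+1} → S_n` lets a permutation act on the first `d+1` letters. -/
theorem stmt4 (K : Type*) [Field K] [CharZero K] (V : Type*) [AddCommGroup V] [Module K V]
    [FiniteDimensional K V] (d n : ℕ) (hd : Module.finrank K V = d) (hn : d < n) :
    ∀ x : MonoidAlgebra K (Equiv.Perm (Fin n)),
      PhiMap K V n x = 0 ↔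
        x ∈ TwoSidedIdeal.span
          {∑ σ : Equiv.Perm (Fin (d + 1)),
            MonoidAlgebra.single (σ.viaEmbedding (Fin.castLEEmb hn)) ((Equiv.Perm.sign σ : ℤ) : K)} :=
  stmt4_general K V d n hd hn
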